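/- A point x ∈ X satisfies 0 ∈ -Dx + H(Ax + u) (i.e., there exists σ ∈ ℝ^n with σ_i ∈ h((Ax+u)_i) for all i and Dx = σ) if and only if -Dx + [Wx + u]_0^1 = 0. Hence the hard-selector system and the linear-threshold network have the same equilibria; moreover, if A is Lyapunov diagonally stable this equilibrium is unique. -/

import Mathlib

open Matrix
open scoped Classical

/-- Saturation nonlinearity `[z]₀¹ = max(0, min(z, 1))`. -/
noncomputable def sat (z : ℝ) : ℝ := max 0 (min z 1)

/-- Convexified hard-selector map `h`. -/
noncomputable def hsel (z : ℝ) : Set ℝ :=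
  if z < 0 then {0} else if z = 0 then Set.Icc 0 1 else {1}

/-! For `y ∈ [0, 1]` and any `γ > 0` one has `y ∈ h(c)` iff `y = [y + γ c]₀¹`. With `γ = 1`,
`y = dᵢxᵢ` and `Wx + u = Dx + (Ax + u)` this is the equivalence of the two equilibrium notions.

For existence and uniqueness, pass to the Euclidean coordinates `zᵢ = rᵢ dᵢ xᵢ` with
`rᵢ = √(λᵢ / dᵢ)`. There `X` is the box `∏ [0, rᵢ]`, and `x ↦ Ax` becomes a linear map `L` with
`⟪L z, z⟫ = ∑ λᵢ xᵢ (Ax)ᵢ`, which is negative definite by diagonal stability, hence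
`⟪L z, z⟫ ≤ -μ‖z‖²` by compactness of the sphere. For small `γ > 0` the projected step
`z ↦ Π_box (z + γ (L z + b))` is then a contraction, and its fixed points are exactly the
equilibria. -/

open scoped RealInnerProductSpace NNReal

lemma sat_mem_Icc (z : ℝ) : sat z ∈ Set.Icc (0 : ℝ) 1 :=
  ⟨le_max_left _ _, max_le zero_le_one (min_le_right _ _)⟩

lemma lipschitzWith_sat : LipschitzWith 1 sat :=
  (LipschitzWith.id.min_const 1).const_max 0

lemma mem_hsel_iff_eq_sat {y c γ : ℝ} (hy : y ∈ Set.Icc (0 : ℝ) 1) (hγ : 0 < γ) :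
    y ∈ hsel c ↔ y = sat (y + γ * c) := by
  obtain ⟨hy0, hy1⟩ := hy
  rcases lt_trichotomy c 0 with hc | rfl | hc
  · have : γ * c < 0 := mul_neg_of_pos_of_neg hγ hc
    simp only [hsel, if_pos hc, Set.mem_singleton_iff, sat, max_def, min_def]
    split_ifs <;> constructor <;> intro h <;> linarith
  · simp [hsel, sat, hy0, hy1]
  · have : 0 < γ * c := mul_pos hγ hc
    simp only [hsel, hc.not_gt, hc.ne', if_false, Set.mem_singleton_iff, sat, max_def, min_def]
    split_ifs <;> constructor <;> intro h <;> linarith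

section Contraction

variable {E : Type*} [NormedAddCommGroup E] [InnerProductSpace ℝ E]

lemma exists_inner_le_neg_mul_norm_sq [FiniteDimensional ℝ E] (L : E →L[ℝ] E)
    (hL : ∀ z ≠ 0, ⟪L z, z⟫ < 0) : ∃ μ > 0, ∀ z, ⟪L z, z⟫ ≤ -μ * ‖z‖ ^ 2 := by
  rcases subsingleton_or_nontrivial E with hE | hE
  · exact ⟨1, one_pos, fun z => by simp [Subsingleton.elim z 0]⟩
  obtain ⟨z₀, hz₀, hmax⟩ := (isCompact_sphere (0 : E) 1).exists_isMaxOn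
    (NormedSpace.sphere_nonempty.2 zero_le_one)
    (by fun_prop : Continuous fun z => ⟪L z, z⟫).continuousOn
  have hz₀ne : z₀ ≠ 0 := ne_zero_of_mem_unit_sphere ⟨z₀, hz₀⟩
  refine ⟨-⟪L z₀, z₀⟫, neg_pos.2 (hL z₀ hz₀ne), fun z => ?_⟩
  rcases eq_or_ne z 0 with rfl | hz
  · simp
  have hnz : 0 < ‖z‖ := norm_pos_iff.2 hz
  have h : ⟪L (‖z‖⁻¹ • z), ‖z‖⁻¹ • z⟫ ≤ ⟪L z₀, z₀⟫ :=
    isMaxOn_iff.1 hmax _ (by simp [norm_smul, hnz.ne'])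
  simp only [map_smul, inner_smul_left, inner_smul_right, RCLike.conj_to_real] at h
  have : ⟪L z, z⟫ = ‖z‖ ^ 2 * (‖z‖⁻¹ * (‖z‖⁻¹ * ⟪L z, z⟫)) := by field_simp
  rw [this, neg_neg, mul_comm _ (‖z‖ ^ 2)]
  exact mul_le_mul_of_nonneg_left h (sq_nonneg _)

lemma exists_norm_add_smul_le {L : E →L[ℝ] E} {μ : ℝ} (hμ : 0 < μ)
    (hL : ∀ z, ⟪L z, z⟫ ≤ -μ * ‖z‖ ^ 2) :
    ∃ γ : ℝ, 0 < γ ∧ ∃ K : ℝ≥0, K < 1 ∧ ∀ z, ‖z + γ • L z‖ ≤ K * ‖z‖ := by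
  -- `γ = μ / (‖L‖² + μ²)` gives `γ² ‖L‖² ≤ γ μ`, so `‖z + γ L z‖² ≤ (1 - 2γμ + γμ) ‖z‖²`.
  set N := ‖L‖ ^ 2 + μ ^ 2
  have hN : 0 < N := by positivity
  set γ := μ / N
  have hγ : 0 < γ := div_pos hμ hN
  have hγμ : γ * μ ≤ 1 := by
    rw [div_mul_eq_mul_div, div_le_one hN]; nlinarith [sq_nonneg ‖L‖]
  have hγL : γ * ‖L‖ ^ 2 ≤ μ := by
    rw [div_mul_eq_mul_div, div_le_iff₀ hN]; nlinarith [sq_nonneg μ, hμ]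
  refine ⟨γ, hγ, (√(1 - γ * μ)).toNNReal, ?_, fun z => ?_⟩
  · rw [Real.toNNReal_lt_one, Real.sqrt_lt' one_pos]
    nlinarith [mul_pos hγ hμ]
  have hsq : ‖z + γ • L z‖ ^ 2 ≤ (1 - γ * μ) * ‖z‖ ^ 2 := by
    have hcross : 2 * γ * ⟪L z, z⟫ ≤ 2 * γ * (-μ * ‖z‖ ^ 2) :=
      mul_le_mul_of_nonneg_left (hL z) (by positivity)
    have hquad : (γ * ‖L z‖) ^ 2 ≤ γ * μ * ‖z‖ ^ 2 :=
      calc (γ * ‖L z‖) ^ 2 ≤ (γ * (‖L‖ * ‖z‖)) ^ 2 := by gcongr; exact L.le_opNorm z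
        _ = γ * (γ * ‖L‖ ^ 2) * ‖z‖ ^ 2 := by ring
        _ ≤ γ * μ * ‖z‖ ^ 2 := by gcongr
    rw [norm_add_sq_real, inner_smul_right, real_inner_comm, norm_smul, Real.norm_of_nonneg hγ.le]
    linarith
  rw [Real.coe_toNNReal _ (Real.sqrt_nonneg _)]
  refine (pow_le_pow_iff_left₀ (norm_nonneg _) (by positivity) two_ne_zero).1 ?_
  rwa [mul_pow, Real.sq_sqrt (by linarith)]

lemma contractingWith_comp_add_smul {L : E →L[ℝ] E} {P : E → E} {γ : ℝ} {K : ℝ≥0}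
    (hP : LipschitzWith 1 P) (hK : K < 1) (hL : ∀ z, ‖z + γ • L z‖ ≤ K * ‖z‖) (b : E) :
    ContractingWith K fun z => P (z + γ • (L z + b)) := by
  refine ⟨hK, LipschitzWith.of_dist_le_mul fun z z' => ?_⟩
  calc dist (P (z + γ • (L z + b))) (P (z' + γ • (L z' + b)))
      ≤ dist (z + γ • (L z + b)) (z' + γ • (L z' + b)) := by simpa using hP.dist_le_mul _ _
    _ = ‖(z - z') + γ • L (z - z')‖ := by
        rw [dist_eq_norm, map_sub, smul_sub]; congr 1; module
    _ ≤ K * dist z z' := by rw [dist_eq_norm]; exact hL _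

end Contraction

section Equilibrium

variable {ι : Type*}

/-- Equilibrium of the hard-selector system: `x ∈ X` and `0 ∈ -Dx + H(Ax + u)`. -/
def IsHSSEquilibrium [Fintype ι] [DecidableEq ι] (d : ι → ℝ) (A : Matrix ι ι ℝ) (u x : ι → ℝ) :
    Prop :=
  (∀ i, d i * x i ∈ Set.Icc (0 : ℝ) 1) ∧
    ∃ σ : ι → ℝ, (∀ i, σ i ∈ hsel ((A *ᵥ x + u) i)) ∧ diagonal d *ᵥ x = σ

lemma isHSSEquilibrium_iff_forall_eq_sat [Fintype ι] [DecidableEq ι] {d : ι → ℝ}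
    {A : Matrix ι ι ℝ} {u x : ι → ℝ} {γ : ℝ} (hγ : 0 < γ) :
    IsHSSEquilibrium d A u x ↔ ∀ i, d i * x i = sat (d i * x i + γ * (A *ᵥ x + u) i) := by
  simp only [IsHSSEquilibrium, exists_eq_right', mulVec_diagonal, ← forall_and]
  refine forall_congr' fun i => ⟨fun ⟨hy, h⟩ => (mem_hsel_iff_eq_sat hy hγ).1 h, fun h => ?_⟩
  have hy : d i * x i ∈ Set.Icc (0 : ℝ) 1 := h ▸ sat_mem_Icc _
  exact ⟨hy, (mem_hsel_iff_eq_sat hy hγ).2 h⟩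

noncomputable def scaleEquiv (c : ι → ℝ) (hc : ∀ i, c i ≠ 0) : (ι → ℝ) ≃ EuclideanSpace ℝ ι where
  toFun x := WithLp.toLp 2 (c * x)
  invFun z := WithLp.ofLp z / c
  left_inv x := funext fun i => by simp [hc i]
  right_inv z := by ext i; simp [mul_div_cancel₀ _ (hc i)]

@[simp]
lemma scaleEquiv_apply (c : ι → ℝ) (hc : ∀ i, c i ≠ 0) (x : ι → ℝ) :
    scaleEquiv c hc x = WithLp.toLp 2 (c * x) := rfl

noncomputable def boxProj (r : ι → ℝ) (z : EuclideanSpace ℝ ι) : EuclideanSpace ℝ ι :=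
  WithLp.toLp 2 fun i => r i * sat (z i / r i)

lemma lipschitzWith_boxProj [Fintype ι] {r : ι → ℝ} (hr : ∀ i, 0 < r i) :
    LipschitzWith 1 (boxProj r) := by
  refine LipschitzWith.of_dist_le_mul fun z z' => ?_
  rw [NNReal.coe_one, one_mul, EuclideanSpace.dist_eq, EuclideanSpace.dist_eq]
  gcongr with i
  have hsat := lipschitzWith_sat.dist_le_mul (z i / r i) (z' i / r i)
  simp only [boxProj, Real.dist_eq, NNReal.coe_one, one_mul, PiLp.toLp_apply] at hsat ⊢
  calc |r i * sat (z i / r i) - r i * sat (z' i / r i)|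
      = r i * |sat (z i / r i) - sat (z' i / r i)| := by rw [← mul_sub, abs_mul, abs_of_pos (hr i)]
    _ ≤ r i * |z i / r i - z' i / r i| := by gcongr; exact (hr i).le
    _ = |z i - z' i| := by
        rw [div_sub_div_same, abs_div, abs_of_pos (hr i), mul_div_cancel₀ _ (hr i).ne']

lemma diagonal_mul_mul_diagonal_inv_mulVec [Fintype ι] [DecidableEq ι] (r : ι → ℝ)
    (A : Matrix ι ι ℝ) {c : ι → ℝ} (hc : ∀ i, c i ≠ 0) (x : ι → ℝ) :
    (diagonal r * A * diagonal c⁻¹) *ᵥ (c * x) = r * A *ᵥ x := by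
  have hx : diagonal c⁻¹ *ᵥ (c * x) = x := funext fun i => by
    simp [mulVec_diagonal, inv_mul_cancel_left₀ (hc i)]
  rw [← mulVec_mulVec, ← mulVec_mulVec, hx]
  ext i
  simp [mulVec_diagonal]

lemma isHSSEquilibrium_iff_isFixedPt [Fintype ι] [DecidableEq ι] {d r : ι → ℝ}
    (hr : ∀ i, r i ≠ 0) {A : Matrix ι ι ℝ} {u : ι → ℝ} {γ : ℝ} (hγ : 0 < γ)
    {L : EuclideanSpace ℝ ι →L[ℝ] EuclideanSpace ℝ ι}
    (hL : ∀ x, L (WithLp.toLp 2 (r * d * x)) = WithLp.toLp 2 (r * A *ᵥ x)) (x : ι → ℝ) :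
    IsHSSEquilibrium d A u x ↔ Function.IsFixedPt
      (fun z => boxProj r (z + γ • (L z + WithLp.toLp 2 (r * u)))) (WithLp.toLp 2 (r * d * x)) := by
  rw [isHSSEquilibrium_iff_forall_eq_sat hγ, Function.IsFixedPt,
    ← (WithLp.ofLp_injective 2).eq_iff, funext_iff]
  refine forall_congr' fun i => ?_
  have harg : (r i * d i * x i + γ * (r i * (A *ᵥ x) i + r i * u i)) / r i
      = d i * x i + γ * (A *ᵥ x + u) i := by
    field_simp [hr i]
    simp
  simp only [hL, boxProj, PiLp.toLp_apply, PiLp.add_apply, PiLp.smul_apply, Pi.mul_apply,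
    smul_eq_mul, harg]
  rw [mul_assoc, mul_right_inj' (hr i), eq_comm]

theorem existsUnique_isHSSEquilibrium [Fintype ι] [DecidableEq ι] {d lam : ι → ℝ}
    (hd : ∀ i, 0 < d i) (hlam : ∀ i, 0 < lam i) {A : Matrix ι ι ℝ}
    (hA : ∀ x ≠ 0, ∑ i, lam i * x i * (A *ᵥ x) i < 0) (u : ι → ℝ) :
    ∃! x, IsHSSEquilibrium d A u x := by
  set r : ι → ℝ := fun i => √(lam i / d i)
  have hr : ∀ i, 0 < r i := fun i => Real.sqrt_pos.2 (div_pos (hlam i) (hd i))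
  have hr2 : ∀ i, r i ^ 2 * d i = lam i := fun i => by
    rw [Real.sq_sqrt (div_pos (hlam i) (hd i)).le, div_mul_cancel₀ _ (hd i).ne']
  have hrd : ∀ i, (r * d) i ≠ 0 := fun i => (mul_pos (hr i) (hd i)).ne'
  set e := scaleEquiv (r * d) hrd
  set L := toEuclideanCLM (𝕜 := ℝ) (diagonal r * A * diagonal (r * d)⁻¹)
  have hLe : ∀ x, L (e x) = WithLp.toLp 2 (r * A *ᵥ x) := fun x =>
    congrArg (WithLp.toLp 2) (diagonal_mul_mul_diagonal_inv_mulVec r A hrd x)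
  have hinner : ∀ x, ⟪L (e x), e x⟫ = ∑ i, lam i * x i * (A *ᵥ x) i := fun x => by
    rw [hLe]
    simp only [e, scaleEquiv_apply, PiLp.inner_apply, Pi.mul_apply, RCLike.inner_apply,
      conj_trivial]
    exact Finset.sum_congr rfl fun i _ => by rw [← hr2 i]; ring
  obtain ⟨μ, hμ, hLμ⟩ := exists_inner_le_neg_mul_norm_sq L fun z hz => by
    rw [← e.apply_symm_apply z, hinner]
    refine hA _ fun h => hz ?_
    rw [← e.apply_symm_apply z, h]
    simp [e]
  obtain ⟨γ, hγ, K, hK, hLK⟩ := exists_norm_add_smul_le hμ hLμ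
  have hΦ := contractingWith_comp_add_smul (lipschitzWith_boxProj hr) hK hLK
    (WithLp.toLp 2 (r * u))
  exact (e.existsUnique_congr (isHSSEquilibrium_iff_isFixedPt (fun i => (hr i).ne') hγ hLe)).2
    ⟨_, hΦ.fixedPoint_isFixedPt, fun _ => hΦ.fixedPoint_unique⟩

lemma dotProduct_transpose_mul_diagonal_add_mulVec [Fintype ι] [DecidableEq ι]
    (A : Matrix ι ι ℝ) (lam z : ι → ℝ) :
    z ⬝ᵥ ((Aᵀ * diagonal lam + diagonal lam * A) *ᵥ z) = 2 * ∑ i, lam i * z i * (A *ᵥ z) i := by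
  rw [add_mulVec, dotProduct_add, ← mulVec_mulVec, ← mulVec_mulVec, dotProduct_mulVec,
    vecMul_transpose, two_mul]
  congr 1 <;> exact Finset.sum_congr rfl fun i _ => by simp [mulVec_diagonal]; ring

lemma isHSSEquilibrium_iff_neg_add_sat_eq_zero [Fintype ι] [DecidableEq ι] {d : ι → ℝ}
    {W A : Matrix ι ι ℝ} (hA : A = W - diagonal d) {u x : ι → ℝ} :
    IsHSSEquilibrium d A u x ↔ -(diagonal d *ᵥ x) + (fun i => sat ((W *ᵥ x + u) i)) = 0 := by
  have hW : ∀ i, (W *ᵥ x + u) i = d i * x i + 1 * (A *ᵥ x + u) i := fun i => by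
    simp [hA, sub_mulVec, mulVec_diagonal]; ring
  rw [isHSSEquilibrium_iff_forall_eq_sat one_pos, funext_iff]
  refine forall_congr' fun i => ?_
  simp only [Pi.add_apply, Pi.neg_apply, mulVec_diagonal, hW, Pi.zero_apply, neg_add_eq_zero]

end Equilibrium

theorem HSS_LTN_same_equilibria_general
    (n : ℕ)
    (d : Fin n → ℝ) (hd : ∀ i, 0 < d i)
    (W : Matrix (Fin n) (Fin n) ℝ) (u : Fin n → ℝ)
    (A : Matrix (Fin n) (Fin n) ℝ) (hA : A = W - Matrix.diagonal d) :
    (∀ x : Fin n → ℝ, (∀ i, d i * x i ∈ Set.Icc (0:ℝ) 1) →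
      ((∃ σ : Fin n → ℝ, (∀ i, σ i ∈ hsel ((A *ᵥ x + u) i))
          ∧ Matrix.diagonal d *ᵥ x = σ)
        ↔ -(Matrix.diagonal d *ᵥ x) + (fun i => sat ((W *ᵥ x + u) i)) = 0))
    ∧ ((∃ lam : Fin n → ℝ, (∀ i, 0 < lam i) ∧
          ∀ z : Fin n → ℝ, z ≠ 0 →
            z ⬝ᵥ ((Aᵀ * Matrix.diagonal lam + Matrix.diagonal lam * A) *ᵥ z) < 0) →
        ∃! x : Fin n → ℝ, (∀ i, d i * x i ∈ Set.Icc (0:ℝ) 1) ∧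
          ∃ σ : Fin n → ℝ, (∀ i, σ i ∈ hsel ((A *ᵥ x + u) i))
            ∧ Matrix.diagonal d *ᵥ x = σ) := by
  refine ⟨fun x hx => (and_iff_right hx).symm.trans (isHSSEquilibrium_iff_neg_add_sat_eq_zero hA),
    fun ⟨lam, hlam, hLDS⟩ => existsUnique_isHSSEquilibrium hd hlam (fun z hz => ?_) u⟩
  have hz' := hLDS z hz
  rw [dotProduct_transpose_mul_diagonal_add_mulVec] at hz'
  linarith

/-- **HSS and LTN have the same equilibria.** A point `x ∈ X` satisfies
`0 ∈ -Dx + H(Ax + u)` iff `-Dx + [Wx + u]₀¹ = 0`; moreover, under Lyapunov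
diagonal stability of `A` this equilibrium is unique. -/
theorem HSS_LTN_same_equilibria
    (n : ℕ) (hn : 1 ≤ n)
    (d : Fin n → ℝ) (hd : ∀ i, 0 < d i)
    (W : Matrix (Fin n) (Fin n) ℝ) (u : Fin n → ℝ)
    (A : Matrix (Fin n) (Fin n) ℝ) (hA : A = W - Matrix.diagonal d) :
    (∀ x : Fin n → ℝ, (∀ i, d i * x i ∈ Set.Icc (0:ℝ) 1) →
      ((∃ σ : Fin n → ℝ, (∀ i, σ i ∈ hsel ((A *ᵥ x + u) i))
          ∧ Matrix.diagonal d *ᵥ x = σ)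
        ↔ -(Matrix.diagonal d *ᵥ x) + (fun i => sat ((W *ᵥ x + u) i)) = 0))
    ∧ ((∃ lam : Fin n → ℝ, (∀ i, 0 < lam i) ∧
          ∀ z : Fin n → ℝ, z ≠ 0 →
            z ⬝ᵥ ((Aᵀ * Matrix.diagonal lam + Matrix.diagonal lam * A) *ᵥ z) < 0) →
        ∃! x : Fin n → ℝ, (∀ i, d i * x i ∈ Set.Icc (0:ℝ) 1) ∧
          ∃ σ : Fin n → ℝ, (∀ i, σ i ∈ hsel ((A *ᵥ x + u) i))
            ∧ Matrix.diagonal d *ᵥ x = σ) :=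
  HSS_LTN_same_equilibria_general n d hd W u A hA
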